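/- In the sequential decoder model, the converse of the subcode-consistency theorem fails in general: there exists an instance (choice of N, decision functions δ_i, frozen/target sets, constraint f) and a received word y such that SC_T(y) equals the transmitted data word u ∈ C_T but SC(y) ≠ u. -/

import Mathlib

/-! At a target index the subcode decoder ignores `δ` and takes the constraint value, so a
decision function that is wrong exactly there is invisible to `SC_T` but not to `SC`. A single
bit suffices: `δ ≡ 1`, the constraint forces `0`, and the transmitted word is `0`. -/

/-- The converse of the subcode-consistency theorem fails in general: there is
an instance of the sequential SC decoder model (block length `N`, frozen set
`F`, target set `T` disjoint from `F`, prefix-dependent decision functions `δ`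
and constraint functions `f` with offsets `b`), a received word `y`, and a data
word `u` satisfying all subcode constraints, such that the subcode decoder
output `ŵ` equals `u` while the stand-alone SC output `û` differs from `u`. -/
theorem sc_converse_fails :
    ∃ (N : ℕ) (Y : Type) (F T : Finset (Fin N)) (_ : Disjoint F T)
      (δ : Fin N → Y → (Fin N → ZMod 2) → ZMod 2)
      (f : Fin N → (Fin N → ZMod 2) → ZMod 2)
      (b : Fin N → ZMod 2) (y : Y) (uhat what u : Fin N → ZMod 2),
      (∀ (i : Fin N) (y' : Y) (v w : Fin N → ZMod 2),
        (∀ j : Fin N, j < i → v j = w j) → δ i y' v = δ i y' w) ∧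
      (∀ (t : Fin N) (v w : Fin N → ZMod 2),
        (∀ j : Fin N, j < t → v j = w j) → f t v = f t w) ∧
      (∀ i : Fin N, uhat i = if i ∈ F then 0 else δ i y uhat) ∧
      (∀ i : Fin N, what i =
        if i ∈ F then 0 else if i ∈ T then f i what + b i else δ i y what) ∧
      (∀ t ∈ T, u t = f t u + b t) ∧ (∀ i ∈ F, u i = 0) ∧
      what = u ∧ uhat ≠ u := by
  refine ⟨1, Unit, ∅, {0}, Finset.disjoint_empty_left _, fun _ _ _ => 1, fun _ _ => 0,
    fun _ => 0, (), fun _ => 1, fun _ => 0, fun _ => 0, fun _ _ _ _ _ => rfl,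
    fun _ _ _ _ => rfl, by decide, by decide, fun _ _ => (add_zero 0).symm,
    fun _ _ => rfl, rfl, fun h => one_ne_zero (congrFun h 0)⟩
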